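/- arXiv:0910.0036 — 2 statements merged into one kernel-verified Lean document; each statement's English description precedes it below -/
import Mathlib

section
/- Let m ≥ 1 and let n₁, …, n_m ≥ 1. Suppose k₁, …, k_m are integers and ψ is a continuous real-valued function on the product space U(n₁) × ⋯ × U(n_m) such that (det u₁)^{k₁} ⋯ (det u_m)^{k_m} · exp(i·ψ(u₁, …, u_m)) = 1 for all (u₁, …, u_m) ∈ U(n₁) × ⋯ × U(n_m). Then k₁ = ⋯ = k_m = 0. -/
/-!
Put the scalar loop `t ↦ e^{it} • 1` into the `j`-th factor and the identity into the others.
Along this loop `det^k` winds `k j * n j` times around the circle, so `k j * n j * t + ψ` is a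
continuous real function with values in `2πℤ`, hence constant; comparing `t = 0` and `t = 2π`
gives `k j * n j = 0`.
-/

open Complex Matrix

namespace Matrix

variable (ι : Type*) [Fintype ι] [DecidableEq ι]

def scalarUnitary (z : Circle) : unitaryGroup ι ℂ :=
  ⟨(z : ℂ) • 1, by simp [mem_unitaryGroup_iff, smul_smul, conj_mul', Circle.norm_coe]⟩

theorem continuous_scalarUnitary : Continuous (scalarUnitary ι) :=
  (continuous_subtype_val.smul continuous_const).subtype_mk _

theorem det_scalarUnitary (z : Circle) :
    det (scalarUnitary ι z : Matrix ι ι ℂ) = (z : ℂ) ^ Fintype.card ι := by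
  simp [scalarUnitary]

end Matrix

theorem Matrix.prod_det_zpow_mulSingle {ι : Type*} [Fintype ι] [DecidableEq ι] {n : ι → Type*}
    [∀ i, Fintype (n i)] [∀ i, DecidableEq (n i)] (k : ι → ℤ) (j : ι) (v : unitaryGroup (n j) ℂ) :
    ∏ i, det ((Pi.mulSingle j v : ∀ i, unitaryGroup (n i) ℂ) i : Matrix (n i) (n i) ℂ) ^ k i =
      det (v : Matrix (n j) (n j) ℂ) ^ k j := by
  rw [Finset.prod_eq_single j (fun i _ hi => by simp [Pi.mulSingle_eq_of_ne hi]) (by simp)]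
  simp

theorem Continuous.eq_of_circleExp_eq_one {X : Type*} [TopologicalSpace X] [PreconnectedSpace X]
    {f : X → ℝ} (hf : Continuous f) (h : ∀ x, Circle.exp (f x) = 1) (x y : X) : f x = f y := by
  have hmem (x : X) : f x ∈ AddSubgroup.zmultiples (2 * Real.pi) := by
    obtain ⟨n, hn⟩ := Circle.exp_eq_one.1 (h x)
    exact ⟨n, by simp [hn]⟩
  have : (⟨f x, hmem x⟩ : AddSubgroup.zmultiples (2 * Real.pi)) = ⟨f y, hmem y⟩ :=
    PreconnectedSpace.constant inferInstance (hf.subtype_mk hmem)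
  exact congrArg Subtype.val this

theorem eq_zero_of_circleExp_mul_add_eq_one {X : Type*} [TopologicalSpace X] {ψ : X → ℝ}
    (hψ : Continuous ψ) {γ : ℝ → X} (hγ : Continuous γ) (hper : γ (2 * Real.pi) = γ 0) {a : ℝ}
    (h : ∀ t, Circle.exp (a * t + ψ (γ t)) = 1) : a = 0 := by
  have hf : Continuous fun t => a * t + ψ (γ t) := by fun_prop
  have := hf.eq_of_circleExp_eq_one h (2 * Real.pi) 0
  simp only [hper, mul_zero, zero_add, add_eq_right] at this
  simpa [Real.pi_ne_zero] using this

theorem stmt_7_general (m : ℕ) (n : Fin m → ℕ) (hn : ∀ j, 1 ≤ n j)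
    (k : Fin m → ℤ)
    (ψ : (∀ j : Fin m, Matrix.unitaryGroup (Fin (n j)) ℂ) → ℝ) (hψ : Continuous ψ)
    (h : ∀ u : ∀ j : Fin m, Matrix.unitaryGroup (Fin (n j)) ℂ,
      (∏ j, (Matrix.det (u j : Matrix (Fin (n j)) (Fin (n j)) ℂ)) ^ (k j)) *
        Complex.exp (Complex.I * (ψ u : ℂ)) = 1) :
    ∀ j, k j = 0 := by
  intro j
  let γ (t : ℝ) : ∀ i, unitaryGroup (Fin (n i)) ℂ :=
    Pi.mulSingle j (scalarUnitary (Fin (n j)) (Circle.exp t))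
  have hγ : Continuous γ :=
    (continuous_mulSingle j).comp ((continuous_scalarUnitary _).comp Circle.exp.continuous)
  have hper : γ (2 * Real.pi) = γ 0 := by simp [γ]
  have hprod (t : ℝ) : ∏ i, det (γ t i : Matrix (Fin (n i)) (Fin (n i)) ℂ) ^ k i =
      ((Circle.exp t : ℂ) ^ n j) ^ k j := by
    rw [← Fintype.card_fin (n j), ← det_scalarUnitary]
    exact prod_det_zpow_mulSingle k j _
  have hloop (t : ℝ) : Circle.exp (k j * n j * t + ψ (γ t)) = 1 := by
    ext
    rw [mul_assoc, Circle.exp_add, Circle.exp_intCast_mul, Circle.exp_natCast_mul]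
    simpa [hprod, Circle.coe_exp, mul_comm I] using h (γ t)
  have hkn := eq_zero_of_circleExp_mul_add_eq_one hψ hγ hper hloop
  have hnj : (n j : ℝ) ≠ 0 := by have := hn j; positivity
  simpa [hnj] using hkn

theorem stmt_7 (m : ℕ) (hm : 1 ≤ m) (n : Fin m → ℕ) (hn : ∀ j, 1 ≤ n j)
    (k : Fin m → ℤ)
    (ψ : (∀ j : Fin m, Matrix.unitaryGroup (Fin (n j)) ℂ) → ℝ) (hψ : Continuous ψ)
    (h : ∀ u : ∀ j : Fin m, Matrix.unitaryGroup (Fin (n j)) ℂ,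
      (∏ j, (Matrix.det (u j : Matrix (Fin (n j)) (Fin (n j)) ℂ)) ^ (k j)) *
        Complex.exp (Complex.I * (ψ u : ℂ)) = 1) :
    ∀ j, k j = 0 :=
  stmt_7_general m n hn k ψ hψ h
end

section
/- Let n ≥ 3 and let S ⊆ ℂⁿ be the Lie sphere, i.e. the set of all z ∈ ℂⁿ of the form z = e^{iθ}·x for some θ ∈ ℝ and some x ∈ ℝⁿ with x₁² + ⋯ + xₙ² = 1, with the subspace topology from ℂⁿ. For every continuous function φ : S → ℂ with φ(z) ≠ 0 for all z ∈ S, there exist a unique integer k and a continuous function ψ : S → ℂ such that φ(z) = (z₁² + ⋯ + zₙ²)^k · exp(ψ(z)) for all z ∈ S. -/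
/-!
Write the points of the Lie sphere as `e^{iθ} x` with `θ ∈ [0, π]` and `x` on the real unit sphere
`S^{n-1}`: this presents the Lie sphere as `[0, π] × S^{n-1}` with `(π, -x)` glued to `(0, x)`, and
the generic norm becomes `e^{2iθ}`. For `n ≥ 3` the sphere `S^{n-1}` is the union of two
contractible closed hemispheres meeting in a connected equator, so `x ↦ φ x` has a continuous
logarithm, and homotopy lifting for `exp` extends it to a logarithm `G` of `φ (e^{iθ} x)` on
`[0, π] × S^{n-1}`. The logarithms `G (π, -x)` and `G (0, x)` of the same function differ by a
constant `2πik`, so `G (θ, x) - 2ikθ` descends to the Lie sphere. The integer `k` is unique because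
along the loop `θ ↦ e^{iθ} x` the generic norm winds around `0` twice, so its `k`-th power winds
`2k` times, which multiplying by `exp ψ` cannot change.
-/

/-- The Lie sphere in ℂⁿ: all points of the form e^{iθ}·x with x ∈ ℝⁿ, ∑ xⱼ² = 1. -/
def LieSphere (n : ℕ) : Set (Fin n → ℂ) :=
  {z | ∃ (θ : ℝ) (x : Fin n → ℝ), (∑ j, x j ^ 2) = 1 ∧
    z = fun j => Complex.exp (Complex.I * (θ : ℂ)) * (x j : ℂ)}

open Complex Metric Module Set Topology

theorem IsPreconnected.exists_int_eq_add_of_exp_eq {X : Type*} [TopologicalSpace X] {s : Set X}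
    (hs : IsPreconnected s) {f g : X → ℂ} (hf : ContinuousOn f s) (hg : ContinuousOn g s)
    (h : ∀ x ∈ s, exp (f x) = exp (g x)) :
    ∃ m : ℤ, ∀ x ∈ s, f x = g x + m * (2 * Real.pi * I) := by
  rcases s.eq_empty_or_nonempty with rfl | ⟨a, ha⟩
  · exact ⟨0, by simp⟩
  obtain ⟨m, hm⟩ := exp_eq_exp_iff_exists_int.mp (h a ha)
  refine ⟨m, fun x hx => isCoveringMap_exp.eqOn_of_comp_eqOn hs hf
    (hg.add continuousOn_const) (fun y hy => ?_) ha hm hx⟩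
  simp [h y hy, exp_add, exp_int_mul_two_pi_mul_I]

theorem exists_continuous_log_of_homotopy {A : Type*} [TopologicalSpace A]
    {H : unitInterval × A → ℂ} (hH : Continuous H) (hH₀ : ∀ p, H p ≠ 0) {g₀ : A → ℂ}
    (hg₀ : Continuous g₀) (hg₀H : ∀ a, H (0, a) = exp (g₀ a)) :
    ∃ G : unitInterval × A → ℂ, Continuous G ∧ ∀ p, H p = exp (G p) := by
  let H' : C(unitInterval × A, {z : ℂ // z ≠ 0}) := ⟨fun p => ⟨H p, hH₀ p⟩, hH.subtype_mk _⟩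
  let G := isCoveringMap_exp.liftHomotopy H' ⟨g₀, hg₀⟩ fun a => Subtype.ext (hg₀H a)
  exact ⟨G, G.continuous, fun p =>
    congrArg Subtype.val (congrFun (isCoveringMap_exp.liftHomotopy_lifts H' _ _) p).symm⟩

theorem ContractibleSpace.exists_continuous_log {A : Type*} [TopologicalSpace A]
    [ContractibleSpace A] {f : A → ℂ} (hf : Continuous f) (hf₀ : ∀ a, f a ≠ 0) :
    ∃ g : A → ℂ, Continuous g ∧ ∀ a, f a = exp (g a) := by
  obtain ⟨a₀, ⟨F⟩⟩ := id_nullhomotopic A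
  obtain ⟨G, hG, hGf⟩ := exists_continuous_log_of_homotopy (H := fun p => f (F.symm p))
    (hf.comp F.symm.continuous) (fun p => hf₀ _) continuous_const
    (g₀ := fun _ => log (f a₀)) (fun a => by simp [exp_log (hf₀ a₀)])
  exact ⟨fun a => G (1, a), hG.comp (Continuous.prodMk_right 1), fun a => by simp [← hGf]⟩

section Sphere

open scoped RealInnerProductSpace

variable {E : Type*} [NormedAddCommGroup E] [InnerProductSpace ℝ E]

def hemisphere (e : E) : Set (sphere (0 : E) 1) := {x | 0 ≤ ⟪e, x⟫}

theorem inner_smul_add_smul_nonneg_and_ne_zero {e x : E} (he : ‖e‖ = 1) (hx : x ≠ 0)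
    (hex : 0 ≤ ⟪e, x⟫) {t : ℝ} (ht₀ : 0 ≤ t) (ht₁ : t ≤ 1) :
    0 ≤ ⟪e, (1 - t) • x + t • e⟫ ∧ (1 - t) • x + t • e ≠ 0 := by
  have hinner : ⟪e, (1 - t) • x + t • e⟫ = (1 - t) * ⟪e, x⟫ + t := by
    simp [inner_add_right, inner_smul_right, he]
  refine ⟨by rw [hinner]; nlinarith, fun h0 => ?_⟩
  rcases ht₀.eq_or_lt with rfl | ht
  · simp [hx] at h0
  · rw [h0, inner_zero_right] at hinner
    nlinarith

theorem contractibleSpace_hemisphere {e : E} (he : ‖e‖ = 1) :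
    ContractibleSpace (hemisphere e) := by
  let v (p : unitInterval × hemisphere e) : E := (1 - (p.1 : ℝ)) • (p.2 : E) + (p.1 : ℝ) • e
  have hv (p : unitInterval × hemisphere e) := inner_smul_add_smul_nonneg_and_ne_zero he
    (ne_zero_of_mem_unit_sphere p.2.1) p.2.2 p.1.2.1 p.1.2.2
  let w (p : unitInterval × hemisphere e) : E := ‖v p‖⁻¹ • v p
  have hw_sphere (p) : w p ∈ sphere (0 : E) 1 :=
    mem_sphere_zero_iff_norm.2 (norm_smul_inv_norm (𝕜 := ℝ) (hv p).2)
  have hw_hemi (p) : ⟨w p, hw_sphere p⟩ ∈ hemisphere e := by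
    simpa [hemisphere, w, inner_smul_right] using mul_nonneg (inv_nonneg.2 (norm_nonneg _)) (hv p).1
  have hvc : Continuous v := by fun_prop
  have hwc : Continuous w :=
    ((continuous_norm.comp hvc).inv₀ fun p => norm_ne_zero_iff.2 (hv p).2).smul hvc
  rw [contractible_iff_id_nullhomotopic]
  refine ⟨⟨⟨e, by simp [he]⟩, by simp [hemisphere, he]⟩, ⟨{
    toFun := fun p => ⟨⟨w p, hw_sphere p⟩, hw_hemi p⟩
    continuous_toFun := (hwc.subtype_mk hw_sphere).subtype_mk hw_hemi
    map_zero_left := fun x => by ext; simp [w, v]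
    map_one_left := fun x => by ext; simp [w, v, he] }⟩⟩

theorem isPreconnected_equator [FiniteDimensional ℝ E] (hE : 3 ≤ finrank ℝ E) {e : E}
    (he : e ≠ 0) : IsPreconnected {x : sphere (0 : E) 1 | ⟪e, x⟫ = 0} := by
  set K := (ℝ ∙ e)ᗮ
  have hK : 1 < Module.rank ℝ K := by
    have := K.finrank_add_finrank_orthogonal
    rw [Submodule.orthogonal_orthogonal, finrank_span_singleton he] at this
    exact lt_rank_of_lt_finrank (by omega)
  have : PreconnectedSpace (sphere (0 : K) 1) :=
    Subtype.preconnectedSpace (isPreconnected_sphere hK 0 1)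
  convert isPreconnected_range (f := fun x : sphere (0 : K) 1 =>
    (⟨x, mem_sphere_zero_iff_norm.2 (norm_eq_of_mem_sphere x)⟩ : sphere (0 : E) 1)) (by fun_prop)
  refine Set.ext fun x => ⟨fun hx =>
    ⟨⟨⟨x, Submodule.mem_orthogonal_singleton_iff_inner_right.2 hx⟩, by simp⟩, rfl⟩, ?_⟩
  rintro ⟨y, rfl⟩
  exact Submodule.mem_orthogonal_singleton_iff_inner_right.1 y.1.2

theorem exists_continuousOn_log_hemisphere {e : E} (he : ‖e‖ = 1) {f : sphere (0 : E) 1 → ℂ}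
    (hf : Continuous f) (hf₀ : ∀ x, f x ≠ 0) :
    ∃ g : sphere (0 : E) 1 → ℂ, ContinuousOn g (hemisphere e) ∧
      ∀ x ∈ hemisphere e, f x = exp (g x) := by
  have := contractibleSpace_hemisphere he
  obtain ⟨g, hg, hfg⟩ := ContractibleSpace.exists_continuous_log
    (hf.comp continuous_subtype_val : Continuous fun x : hemisphere e => f x) fun x => hf₀ x
  classical
  refine ⟨fun x => if hx : x ∈ hemisphere e then g ⟨x, hx⟩ else 0, ?_,
    fun x hx => by simpa [hx] using hfg ⟨x, hx⟩⟩
  rw [continuousOn_iff_continuous_domRestrict]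
  convert hg using 1
  funext x
  simp [x.2]

theorem hemisphere_neg (e : E) : hemisphere (-e) = {x : sphere (0 : E) 1 | ⟪e, x⟫ ≤ 0} := by
  ext x
  simp [hemisphere, inner_neg_left]

theorem exists_continuous_log_sphere [FiniteDimensional ℝ E] (hE : 3 ≤ finrank ℝ E)
    {f : sphere (0 : E) 1 → ℂ} (hf : Continuous f) (hf₀ : ∀ x, f x ≠ 0) :
    ∃ g : sphere (0 : E) 1 → ℂ, Continuous g ∧ ∀ x, f x = exp (g x) := by
  have : Nontrivial E := (finrank_pos_iff (R := ℝ)).1 (by omega)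
  obtain ⟨e, he⟩ := exists_norm_eq E zero_le_one
  obtain ⟨g₁, hg₁, hfg₁⟩ := exists_continuousOn_log_hemisphere he hf hf₀
  obtain ⟨g₂, hg₂, hfg₂⟩ := exists_continuousOn_log_hemisphere ((norm_neg e).trans he) hf hf₀
  rw [hemisphere_neg] at hg₂ hfg₂
  have he₀ : e ≠ 0 := norm_ne_zero_iff.1 (he ▸ one_ne_zero)
  obtain ⟨m, hm⟩ := (isPreconnected_equator hE he₀).exists_int_eq_add_of_exp_eq
    (hg₂.mono fun x hx => le_of_eq hx) (hg₁.mono fun x (hx : ⟪e, x⟫ = 0) => ge_of_eq hx)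
    (fun x hx => by rw [← hfg₂ x (le_of_eq hx), ← hfg₁ x (ge_of_eq hx)])
  refine ⟨fun x => if ⟪e, x⟫ ≤ 0 then g₂ x else g₁ x + m * (2 * Real.pi * I),
    continuous_if_le (by fun_prop) continuous_const hg₂ (hg₁.add continuousOn_const) hm,
    fun x => ?_⟩
  dsimp only
  split_ifs with hx
  · exact hfg₂ x hx
  · rw [exp_add, exp_int_mul_two_pi_mul_I, mul_one, ← hfg₁ x (le_of_not_ge hx)]

end Sphere

section LieSphere

variable {n : ℕ}

theorem EuclideanSpace.mem_sphere_zero_one_iff {x : EuclideanSpace ℝ (Fin n)} :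
    x ∈ sphere (0 : EuclideanSpace ℝ (Fin n)) 1 ↔ ∑ j, x j ^ 2 = 1 := by
  rw [← EuclideanSpace.real_norm_sq_eq, mem_sphere_zero_iff_norm,
    pow_eq_one_iff_of_nonneg (norm_nonneg x) two_ne_zero]

noncomputable def lieSphereMk (θ : ℝ) (x : sphere (0 : EuclideanSpace ℝ (Fin n)) 1) :
    LieSphere n :=
  ⟨fun j => exp (I * θ) * ((x : EuclideanSpace ℝ (Fin n)) j : ℂ), θ, _,
    EuclideanSpace.mem_sphere_zero_one_iff.1 x.2, rfl⟩

@[fun_prop]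
theorem Continuous.lieSphereMk {X : Type*} [TopologicalSpace X] {f : X → ℝ}
    {g : X → sphere (0 : EuclideanSpace ℝ (Fin n)) 1} (hf : Continuous f) (hg : Continuous g) :
    Continuous fun a => lieSphereMk (f a) (g a) := by
  unfold _root_.lieSphereMk
  fun_prop

theorem sum_sq_lieSphereMk (θ : ℝ) (x : sphere (0 : EuclideanSpace ℝ (Fin n)) 1) :
    ∑ j, ((lieSphereMk θ x : Fin n → ℂ) j) ^ 2 = exp (2 * θ * I) := by
  have hx : ∑ j, (((x : EuclideanSpace ℝ (Fin n)) j : ℝ) : ℂ) ^ 2 = 1 := by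
    exact_mod_cast EuclideanSpace.mem_sphere_zero_one_iff.1 x.2
  simp only [lieSphereMk, mul_pow, ← Finset.mul_sum, hx, mul_one, ← exp_nat_mul]
  ring_nf

theorem lieSphereMk_injective (θ : ℝ) :
    Function.Injective (lieSphereMk θ : sphere (0 : EuclideanSpace ℝ (Fin n)) 1 → LieSphere n) := by
  intro x y h
  ext j
  have := congrFun (congrArg Subtype.val h) j
  simpa [lieSphereMk, exp_ne_zero] using this

theorem lieSphereMk_add_pi (θ : ℝ) (x : sphere (0 : EuclideanSpace ℝ (Fin n)) 1) :
    lieSphereMk (θ + Real.pi) x = lieSphereMk θ (-x) := by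
  ext j
  simp [lieSphereMk, mul_comm I, add_mul, exp_add, exp_pi_mul_I]

theorem lieSphereMk_pi (x : sphere (0 : EuclideanSpace ℝ (Fin n)) 1) :
    lieSphereMk Real.pi x = lieSphereMk 0 (-x) := by
  rw [← lieSphereMk_add_pi, zero_add]

theorem lieSphereMk_periodic (x : sphere (0 : EuclideanSpace ℝ (Fin n)) 1) :
    Function.Periodic (lieSphereMk · x) (2 * Real.pi) := fun θ => by
  simp only [two_mul, ← add_assoc, lieSphereMk_add_pi, neg_neg]

theorem exists_lieSphereMk_eq (z : LieSphere n) :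
    ∃ θ ∈ Icc 0 Real.pi, ∃ x, lieSphereMk θ x = z := by
  obtain ⟨_, θ, x, hx, rfl⟩ := z
  let x' : sphere (0 : EuclideanSpace ℝ (Fin n)) 1 :=
    ⟨WithLp.toLp 2 x, EuclideanSpace.mem_sphere_zero_one_iff.2 hx⟩
  obtain ⟨θ₀, hθ₀, hθ⟩ := (lieSphereMk_periodic x').exists_mem_Ico₀ Real.two_pi_pos θ
  have hz : lieSphereMk θ₀ x' = ⟨_, θ, x, hx, rfl⟩ := hθ.symm
  by_cases hπ : θ₀ ≤ Real.pi
  · exact ⟨θ₀, ⟨hθ₀.1, hπ⟩, x', hz⟩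
  · refine ⟨θ₀ - Real.pi, ⟨by linarith, by linarith [hθ₀.2]⟩, -x', ?_⟩
    rw [← lieSphereMk_add_pi, sub_add_cancel, hz]

theorem isQuotientMap_lieSphereMk :
    IsQuotientMap fun p : unitInterval × sphere (0 : EuclideanSpace ℝ (Fin n)) 1 =>
      lieSphereMk (Real.pi * p.1) p.2 := by
  refine .of_surjective_continuous (fun z => ?_) (by fun_prop)
  obtain ⟨θ, hθ, x, rfl⟩ := exists_lieSphereMk_eq z
  refine ⟨(⟨θ / Real.pi, div_nonneg hθ.1 Real.pi_pos.le, div_le_one_of_le₀ hθ.2 Real.pi_pos.le⟩,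
    x), ?_⟩
  simp [mul_div_cancel₀ _ Real.pi_ne_zero]

theorem eq_of_lieSphereMk_pi_mul_eq {t t' : unitInterval}
    {x x' : sphere (0 : EuclideanSpace ℝ (Fin n)) 1}
    (h : lieSphereMk (Real.pi * t) x = lieSphereMk (Real.pi * t') x') :
    (t = t' ∧ x = x') ∨ (t = 0 ∧ t' = 1 ∧ x' = -x) ∨ (t = 1 ∧ t' = 0 ∧ x' = -x) := by
  have hN := congrArg (fun z : LieSphere n => ∑ j, ((z : Fin n → ℂ) j) ^ 2) h
  simp only [sum_sq_lieSphereMk] at hN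
  obtain ⟨m, hm⟩ := exp_eq_exp_iff_exists_int.1 hN
  have htt' : (t : ℝ) = t' + m := by
    refine ofReal_injective (mul_right_cancel₀ two_pi_I_ne_zero ?_)
    push_cast at hm ⊢
    linear_combination hm
  have t0 := unitInterval.nonneg t; have t1 := unitInterval.le_one t
  have t'0 := unitInterval.nonneg t'; have t'1 := unitInterval.le_one t'
  have hm₁ : (-1 : ℝ) ≤ m ∧ (m : ℝ) ≤ 1 := ⟨by linarith, by linarith⟩
  obtain rfl | rfl | rfl : m = -1 ∨ m = 0 ∨ m = 1 := by
    have : -1 ≤ m ∧ m ≤ 1 := ⟨by exact_mod_cast hm₁.1, by exact_mod_cast hm₁.2⟩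
    omega
  · obtain rfl : t = 0 := Subtype.ext (show (t : ℝ) = 0 by push_cast at htt'; linarith)
    obtain rfl : t' = 1 := Subtype.ext (show (t' : ℝ) = 1 by push_cast at htt'; linarith)
    simp only [Set.Icc.coe_zero, Set.Icc.coe_one, mul_zero, mul_one] at h
    rw [lieSphereMk_pi] at h
    exact Or.inr (Or.inl ⟨rfl, rfl, by rw [lieSphereMk_injective 0 h, neg_neg]⟩)
  · obtain rfl : t = t' := Subtype.ext (by simpa using htt')
    exact Or.inl ⟨rfl, lieSphereMk_injective _ h⟩
  · obtain rfl : t = 1 := Subtype.ext (show (t : ℝ) = 1 by push_cast at htt'; linarith)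
    obtain rfl : t' = 0 := Subtype.ext (show (t' : ℝ) = 0 by push_cast at htt'; linarith)
    simp only [Set.Icc.coe_zero, Set.Icc.coe_one, mul_zero, mul_one] at h
    rw [lieSphereMk_pi] at h
    exact Or.inr (Or.inr ⟨rfl, rfl, (lieSphereMk_injective 0 h).symm⟩)

theorem LieSphere.exists_eq_zpow_mul_exp (hn : 3 ≤ n) {φ : LieSphere n → ℂ} (hφ : Continuous φ)
    (hφ₀ : ∀ z, φ z ≠ 0) :
    ∃ k : ℤ, ∃ ψ : LieSphere n → ℂ, Continuous ψ ∧
      ∀ z : LieSphere n, φ z = (∑ j, ((z : Fin n → ℂ) j) ^ 2) ^ k * exp (ψ z) := by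
  let Q (p : unitInterval × sphere (0 : EuclideanSpace ℝ (Fin n)) 1) : LieSphere n :=
    lieSphereMk (Real.pi * p.1) p.2
  have hQ : Continuous Q := by fun_prop
  have hE : 3 ≤ finrank ℝ (EuclideanSpace ℝ (Fin n)) := by simpa using hn
  obtain ⟨g₀, hg₀, hφg₀⟩ := exists_continuous_log_sphere hE (f := fun x => φ (Q (0, x)))
    (by fun_prop) fun _ => hφ₀ _
  obtain ⟨G, hG, hφG⟩ := exists_continuous_log_of_homotopy (hφ.comp hQ) (fun _ => hφ₀ _) hg₀ hφg₀
  have : PreconnectedSpace (sphere (0 : EuclideanSpace ℝ (Fin n)) 1) :=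
    Subtype.preconnectedSpace (isPreconnected_sphere (lt_rank_of_lt_finrank (by omega)) 0 1)
  obtain ⟨k, hk⟩ := isPreconnected_univ.exists_int_eq_add_of_exp_eq
    (f := fun x => G (1, -x)) (g := fun x => G (0, x)) (by fun_prop) (by fun_prop) fun x _ => by
      rw [← hφG, ← hφG]
      simp [Q, lieSphereMk_pi]
  let Ψ (p : unitInterval × sphere (0 : EuclideanSpace ℝ (Fin n)) 1) : ℂ :=
    G p - k * (2 * (Real.pi * p.1) * I)
  have hΨ_flip (x) : Ψ (1, -x) = Ψ (0, x) := by
    simp only [Ψ, hk x (mem_univ x)]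
    push_cast
    ring
  have hΨ : Function.FactorsThrough Ψ Q := by
    rintro ⟨t, x⟩ ⟨t', x'⟩ h
    rcases eq_of_lieSphereMk_pi_mul_eq h with ⟨rfl, rfl⟩ | ⟨rfl, rfl, rfl⟩ | ⟨rfl, rfl, rfl⟩
    · rfl
    · exact (hΨ_flip x).symm
    · rw [← hΨ_flip, neg_neg]
  refine ⟨k, Function.extend Q Ψ 0, ?_, fun z => ?_⟩
  · rw [isQuotientMap_lieSphereMk.continuous_iff, hΨ.extend_comp]
    fun_prop
  · obtain ⟨p, rfl⟩ : ∃ p, Q p = z := isQuotientMap_lieSphereMk.surjective z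
    rw [hΨ.extend_apply, show φ (Q p) = exp (G p) from hφG p, sum_sq_lieSphereMk, ← exp_int_mul,
      ← exp_add]
    simp only [Ψ]
    push_cast
    ring_nf

theorem LieSphere.eq_of_zpow_mul_exp_eq (hn : 0 < n) {k k' : ℤ} {ψ ψ' : LieSphere n → ℂ}
    (hψ : Continuous ψ) (hψ' : Continuous ψ')
    (h : ∀ z : LieSphere n, (∑ j, ((z : Fin n → ℂ) j) ^ 2) ^ k * exp (ψ z) =
      (∑ j, ((z : Fin n → ℂ) j) ^ 2) ^ k' * exp (ψ' z)) :
    k = k' := by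
  let x₀ : sphere (0 : EuclideanSpace ℝ (Fin n)) 1 := ⟨EuclideanSpace.single ⟨0, hn⟩ 1, by simp⟩
  obtain ⟨m, hm⟩ := isPreconnected_univ.exists_int_eq_add_of_exp_eq
    (f := fun θ : ℝ => k * (2 * θ * I) + ψ (lieSphereMk θ x₀))
    (g := fun θ : ℝ => k' * (2 * θ * I) + ψ' (lieSphereMk θ x₀)) (by fun_prop) (by fun_prop)
    fun θ _ => by simpa [exp_add, exp_int_mul, sum_sq_lieSphereMk] using h (lieSphereMk θ x₀)
  have h0 := hm 0 (mem_univ _)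
  have h2π := hm (2 * Real.pi) (mem_univ _)
  rw [show lieSphereMk (2 * Real.pi) x₀ = lieSphereMk 0 x₀ by simpa using lieSphereMk_periodic x₀ 0]
    at h2π
  have : ((k - k' : ℤ) : ℂ) * (4 * Real.pi * I) = 0 := by
    push_cast at h0 h2π ⊢
    linear_combination h2π - h0
  simpa [sub_eq_zero, Real.pi_ne_zero, I_ne_zero] using this

end LieSphere

theorem stmt_11 (n : ℕ) (hn : 3 ≤ n)
    (φ : LieSphere n → ℂ) (hφ : Continuous φ) (hnv : ∀ z, φ z ≠ 0) :
    ∃! k : ℤ, ∃ ψ : LieSphere n → ℂ, Continuous ψ ∧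
      ∀ z : LieSphere n, φ z = (∑ j, ((z : Fin n → ℂ) j) ^ 2) ^ k * Complex.exp (ψ z) := by
  obtain ⟨k, ψ, hψ, hφψ⟩ := LieSphere.exists_eq_zpow_mul_exp hn hφ hnv
  refine ⟨k, ⟨ψ, hψ, hφψ⟩, fun k' ⟨ψ', hψ', hφψ'⟩ => ?_⟩
  exact (LieSphere.eq_of_zpow_mul_exp_eq (by omega) hψ hψ' fun z =>
    (hφψ z).symm.trans (hφψ' z)).symm
end
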